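/- arXiv:2510.19567 — 3 statements merged into one kernel-verified Lean document; each statement's English description precedes it below -/
import Mathlib

section
/- Let G = (V,E) be a finite, simple, undirected, connected graph, let n ≥ 1, and let S, T ⊆ V be connected vertex sets with |S| = |T| = n. Then there exists a valid plan from S to T. In particular, every instance of Connected Unlabeled Multi-Agent Pathfinding on a finite connected graph is solvable. -/
/-!
A connected configuration `Q` can absorb a vertex `u ∉ Q` adjacent to it in one step: inside the
connected set `Q ∪ {u}` choose a vertex `w` whose removal keeps it connected, and shift every agent
on a path from `w` to `u` one vertex forward. Such a `w` exists outside any prescribed connected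
proper subset `A`: grow `A` one adjacent vertex at a time and take the last vertex added.

So first drag the configuration along a walk from `S` until it meets some `t ∈ T`; then grow a
connected set `A ⊆ T`, starting from `{t}`, by a vertex of `T` adjacent to `A`, each time absorbing
that vertex while keeping `A` inside the configuration, until `A = T`.
-/

open SimpleGraph

variable {V : Type*}

/-- A vertex set `Q` is connected if the subgraph of `G` induced by `Q` is connected. -/
def ConnSet (G : SimpleGraph V) (Q : Finset V) : Prop :=
  (G.induce (Q : Set V)).Connected

/-- `Q'` is reachable from `Q` in one step: there is a bijection `φ` between the two
vertex sets moving every agent to an adjacent vertex or keeping it in place,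
with no swap conflict. -/
def OneStep (G : SimpleGraph V) (Q Q' : Finset V) : Prop :=
  ∃ φ : {x // x ∈ Q} ≃ {x // x ∈ Q'},
    (∀ v : {x // x ∈ Q}, ((φ v : V) = (v : V)) ∨ G.Adj (v : V) ((φ v : V))) ∧
    ∀ u v : {x // x ∈ Q}, (u : V) ≠ (v : V) →
      ¬(((φ u : V) = (v : V)) ∧ ((φ v : V) = (u : V)))

/-- A valid plan from `S` to `T` with makespan `tstar`: a sequence of vertex sets,
each of size `n` and connected, starting at `S`, ending at `T`, with each
consecutive pair one-step reachable. -/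
def ValidPlan (G : SimpleGraph V) (n : ℕ) (S T : Finset V) (tstar : ℕ)
    (P : ℕ → Finset V) : Prop :=
  P 0 = S ∧ P tstar = T ∧
  (∀ k ≤ tstar, (P k).card = n ∧ ConnSet G (P k)) ∧
  ∀ k < tstar, OneStep G (P k) (P (k + 1))

section Connectivity

variable {G : SimpleGraph V} {Q : Finset V}

theorem connSet_singleton (G : SimpleGraph V) (v : V) : ConnSet G {v} := by
  rw [ConnSet, Finset.coe_singleton]
  exact ⟨Preconnected.of_subsingleton⟩

theorem ConnSet.nonempty (hQ : ConnSet G Q) : Q.Nonempty :=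
  let ⟨x⟩ := Connected.nonempty hQ
  ⟨x, x.2⟩

variable [DecidableEq V]

theorem ConnSet.exists_adj_of_ssubset {A : Finset V} (hQ : ConnSet G Q) (hA : A.Nonempty)
    (hAQ : A ⊂ Q) : ∃ a ∈ A, ∃ u ∈ Q \ A, G.Adj a u := by
  obtain ⟨a, ha⟩ := hA
  obtain ⟨q, hqQ, hqA⟩ := Finset.exists_of_ssubset hAQ
  obtain ⟨p⟩ := hQ.preconnected ⟨a, hAQ.subset ha⟩ ⟨q, hqQ⟩
  obtain ⟨d, -, hd₁, hd₂⟩ := p.exists_boundary_dart {x | x.1 ∈ A} ha hqA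
  exact ⟨d.fst, hd₁, d.snd, Finset.mem_sdiff.2 ⟨d.snd.2, hd₂⟩, d.adj⟩

theorem ConnSet.insert_of_adj {a u : V} (hQ : ConnSet G Q) (ha : a ∈ Q) (hadj : G.Adj a u) :
    ConnSet G (insert u Q) := by
  rw [ConnSet, Finset.coe_insert, Set.insert_eq]
  exact connected_induce_union Preconnected.of_subsingleton hQ.preconnected
    (Set.mem_singleton u) ha hadj.symm

theorem ConnSet.exists_connSet_erase {A : Finset V} (hQ : ConnSet G Q) (hA : ConnSet G A)
    (hAQ : A ⊂ Q) : ∃ w ∈ Q \ A, ConnSet G (Q.erase w) := by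
  obtain ⟨a, ha, u, hu, hadj⟩ := hQ.exists_adj_of_ssubset hA.nonempty hAQ
  obtain ⟨huQ, huA⟩ := Finset.mem_sdiff.1 hu
  by_cases hQu : Q = insert u A
  · refine ⟨u, hu, ?_⟩
    rwa [hQu, Finset.erase_insert huA]
  · obtain ⟨w, hw, hQw⟩ := hQ.exists_connSet_erase (hA.insert_of_adj ha hadj)
      (Finset.ssubset_iff_subset_ne.2 ⟨Finset.insert_subset huQ hAQ.subset, Ne.symm hQu⟩)
    exact ⟨w, Finset.sdiff_subset_sdiff le_rfl (Finset.subset_insert u A) hw, hQw⟩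
termination_by (Q \ A).card
decreasing_by
  rw [Finset.sdiff_insert]
  exact Finset.card_erase_lt_of_mem hu

end Connectivity

section Rotation

variable {G : SimpleGraph V} {Q Q' : Finset V}

theorem oneStep_of_perm (f : Equiv.Perm V) (hf : ∀ x, f x ∈ Q' ↔ x ∈ Q)
    (hadj : ∀ x ∈ Q, f x = x ∨ G.Adj x (f x))
    (hswap : ∀ x ∈ Q, f x ∈ Q → f (f x) = x → f x = x) : OneStep G Q Q' := by
  refine ⟨f.subtypeEquiv fun x => (hf x).symm, fun v => hadj v v.2, ?_⟩
  rintro ⟨a, ha⟩ ⟨b, hb⟩ hab ⟨hfa, hfb⟩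
  simp only [Equiv.subtypeEquiv_apply] at hfa hfb hab
  subst hfa
  exact hab (hswap a ha hb hfb).symm

variable [DecidableEq V]

theorem oneStep_insert_erase_of_isPath {w u : V} (p : G.Walk w u) (hp : p.IsPath)
    (hpQ : ∀ x ∈ p.support, x ∈ insert u Q) (hu : u ∉ Q) :
    OneStep G Q ((insert u Q).erase w) := by
  set L := p.support
  -- `f` advances every agent on the path one vertex towards `u`, and sends `u` (no agent) to `w`.
  set f := L.formPerm
  have hnd : L.Nodup := hp.support_nodup
  have hlen : 0 < L.length := List.length_pos_iff.2 p.support_ne_nil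
  have hlast : L[L.length - 1] = u := by
    rw [← List.getLast_eq_getElem]
    exact p.getLast_support
  have hQ_index : ∀ x ∈ Q, x ∈ L → ∃ i, ∃ hi : i + 1 < L.length, L[i] = x := by
    intro x hxQ hxL
    obtain ⟨i, hi, rfl⟩ := List.getElem_of_mem hxL
    refine ⟨i, ?_, rfl⟩
    by_contra hi'
    obtain rfl : i = L.length - 1 := by omega
    exact hu (hlast ▸ hxQ)
  have hfu : f u = w := by
    rw [← hlast, List.formPerm_apply_getElem _ hnd]
    simp only [L, Walk.length_support, add_tsub_cancel_right, Nat.mod_self,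
      Walk.support_getElem_zero]
  have hf_off : ∀ x ∉ L, f x = x := fun x => List.formPerm_apply_of_notMem
  have hf_index : ∀ i (hi : i + 1 < L.length), f L[i] = L[i + 1] :=
    List.formPerm_apply_lt_getElem L hnd
  refine oneStep_of_perm f (fun x => ?_) (fun x hx => ?_) (fun x hx hfx hffx => ?_)
  · have hf_insert : f x ∈ insert u Q ↔ x ∈ insert u Q := by
      by_cases hxL : x ∈ L
      · exact iff_of_true (hpQ _ (List.formPerm_apply_mem_of_mem hxL)) (hpQ x hxL)
      · rw [hf_off x hxL]
    rw [Finset.mem_erase, hf_insert, ← hfu, f.injective.ne_iff, Finset.mem_insert]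
    exact ⟨fun ⟨hxu, hx⟩ => hx.resolve_left hxu, fun hx => ⟨ne_of_mem_of_not_mem hx hu, .inr hx⟩⟩
  · by_cases hxL : x ∈ L
    · obtain ⟨i, hi, rfl⟩ := hQ_index x hx hxL
      rw [hf_index i hi]
      exact .inr (p.isChain_adj_support.getElem i hi)
    · exact .inl (hf_off x hxL)
  · by_cases hxL : x ∈ L
    · obtain ⟨i, hi, rfl⟩ := hQ_index x hx hxL
      rw [hf_index i hi] at hfx hffx
      obtain ⟨j, hj, hji⟩ := hQ_index _ hfx (List.getElem_mem _)
      obtain rfl : j = i + 1 := hnd.getElem_inj_iff.1 hji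
      rw [← hji, hf_index _ hj, hnd.getElem_inj_iff] at hffx
      omega
    · exact hf_off x hxL

end Rotation

section Plans

open Relation

variable {G : SimpleGraph V} {n : ℕ}

def PlanStep (G : SimpleGraph V) (n : ℕ) (Q Q' : Finset V) : Prop :=
  OneStep G Q Q' ∧ Q'.card = n ∧ ConnSet G Q'

theorem exists_validPlan_of_reflTransGen {S T : Finset V} (hScard : S.card = n)
    (hS : ConnSet G S) (h : ReflTransGen (PlanStep G n) S T) :
    ∃ tstar P, ValidPlan G n S T tstar P := by
  induction h with
  | refl =>
    exact ⟨0, fun _ => S, rfl, rfl, fun _ _ => ⟨hScard, hS⟩,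
      fun _ h => absurd h (Nat.not_lt_zero _)⟩
  | @tail T U _ hstep ih =>
    obtain ⟨t, P, hP0, hPt, hPconf, hPstep⟩ := ih
    refine ⟨t + 1, Function.update P (t + 1) U, ?_, by simp, fun k hk => ?_, fun k hk => ?_⟩
    · rw [Function.update_of_ne (by omega), hP0]
    · rcases hk.lt_or_eq with hk | rfl
      · rw [Function.update_of_ne hk.ne]
        exact hPconf k (by omega)
      · simpa using hstep.2
    · rcases (Nat.lt_succ_iff.1 hk).lt_or_eq with hk | rfl
      · rw [Function.update_of_ne (by omega), Function.update_of_ne (by omega)]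
        exact hPstep k hk
      · simpa [Function.update_of_ne, hPt] using hstep.1

variable [DecidableEq V]

theorem ConnSet.exists_reflTransGen_superset {Q A : Finset V} {q u : V} (hQ : ConnSet G Q)
    (hQcard : Q.card = n) (hq : q ∈ Q) (hadj : G.Adj q u) (hA : ConnSet G A)
    (hAQ : A ⊆ insert u Q) (hAcard : A.card ≤ n) :
    ∃ Q', ReflTransGen (PlanStep G n) Q Q' ∧ ConnSet G Q' ∧ Q'.card = n ∧ A ⊆ Q' := by
  by_cases huQ : u ∈ Q
  · exact ⟨Q, .refl, hQ, hQcard, Finset.insert_eq_of_mem huQ ▸ hAQ⟩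
  have hQu : ConnSet G (insert u Q) := hQ.insert_of_adj hq hadj
  have hQu_card : (insert u Q).card = n + 1 := by rw [Finset.card_insert_of_notMem huQ, hQcard]
  obtain ⟨w, hw, hQw⟩ := hQu.exists_connSet_erase hA
    (Finset.ssubset_iff_subset_ne.2 ⟨hAQ, fun h => by rw [h] at hAcard; omega⟩)
  obtain ⟨hwQu, hwA⟩ := Finset.mem_sdiff.1 hw
  obtain ⟨p, hp⟩ := (hQu.preconnected ⟨w, hwQu⟩ ⟨u, by simp⟩).exists_isPath
  have hstep : OneStep G Q ((insert u Q).erase w) := by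
    refine oneStep_insert_erase_of_isPath (p.map (Embedding.induce _).toHom)
      (hp.map Subtype.val_injective) (fun x hx => ?_) huQ
    replace hx : x ∈ (p.map (Embedding.induce _).toHom).support := hx
    rw [Walk.support_map, List.mem_map] at hx
    obtain ⟨y, -, rfl⟩ := hx
    exact y.2
  have hcard : ((insert u Q).erase w).card = n := by
    rw [Finset.card_erase_of_mem hwQu, hQu_card, Nat.add_sub_cancel]
  exact ⟨_, .single ⟨hstep, hcard, hQw⟩, hQw, hcard,
    fun x hx => Finset.mem_erase.2 ⟨ne_of_mem_of_not_mem hx hwA, hAQ hx⟩⟩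

theorem ConnSet.exists_reflTransGen_mem_of_walk {q t : V} (p : G.Walk q t) {Q : Finset V}
    (hQ : ConnSet G Q) (hQcard : Q.card = n) (hq : q ∈ Q) :
    ∃ Q', ReflTransGen (PlanStep G n) Q Q' ∧ ConnSet G Q' ∧ Q'.card = n ∧ t ∈ Q' := by
  induction p generalizing Q with
  | nil => exact ⟨Q, .refl, hQ, hQcard, hq⟩
  | cons hadj p ih =>
    obtain ⟨Q₁, hQQ₁, hQ₁, hQ₁card, hcQ₁⟩ := hQ.exists_reflTransGen_superset hQcard hq hadj
      (connSet_singleton G _) (Finset.singleton_subset_iff.2 (Finset.mem_insert_self _ _))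
      (hQcard ▸ Finset.card_pos.2 ⟨_, hq⟩)
    obtain ⟨Q₂, hQ₁Q₂, hQ₂⟩ := ih hQ₁ hQ₁card (by simpa using hcQ₁)
    exact ⟨Q₂, hQQ₁.trans hQ₁Q₂, hQ₂⟩

theorem ConnSet.reflTransGen_of_subset {T A Q : Finset V} (hT : ConnSet G T)
    (hTcard : T.card = n) (hA : ConnSet G A) (hAT : A ⊆ T) (hQ : ConnSet G Q)
    (hQcard : Q.card = n) (hAQ : A ⊆ Q) : ReflTransGen (PlanStep G n) Q T := by
  by_cases hAT' : A = T
  · obtain rfl : Q = T := (Finset.eq_of_subset_of_card_le (hAT' ▸ hAQ) (by omega)).symm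
    exact .refl
  obtain ⟨a, ha, u, hu, hadj⟩ := hT.exists_adj_of_ssubset hA.nonempty
    (Finset.ssubset_iff_subset_ne.2 ⟨hAT, hAT'⟩)
  obtain ⟨huT, huA⟩ := Finset.mem_sdiff.1 hu
  have hAu : ConnSet G (insert u A) := hA.insert_of_adj ha hadj
  have hAuT : insert u A ⊆ T := Finset.insert_subset huT hAT
  obtain ⟨Q', hQQ', hQ', hQ'card, hAuQ'⟩ := hQ.exists_reflTransGen_superset hQcard (hAQ ha)
    hadj hAu (Finset.insert_subset_insert u hAQ) (hTcard ▸ Finset.card_le_card hAuT)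
  exact hQQ'.trans (hT.reflTransGen_of_subset hTcard hAu hAuT hQ' hQ'card hAuQ')
termination_by (T \ A).card
decreasing_by
  rw [Finset.sdiff_insert]
  exact Finset.card_erase_lt_of_mem hu

end Plans

theorem stmt0_general (G : SimpleGraph V) (hG : G.Connected)
    (n : ℕ) (S T : Finset V)
    (hS : ConnSet G S) (hT : ConnSet G T)
    (hScard : S.card = n) (hTcard : T.card = n) :
    ∃ (tstar : ℕ) (P : ℕ → Finset V), ValidPlan G n S T tstar P := by
  classical
  obtain ⟨s, hs⟩ := hS.nonempty
  obtain ⟨t, ht⟩ := hT.nonempty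
  obtain ⟨Q, hSQ, hQ, hQcard, htQ⟩ :=
    hS.exists_reflTransGen_mem_of_walk (hG.preconnected s t).some hScard hs
  have hQT := hT.reflTransGen_of_subset hTcard (connSet_singleton G t)
    (Finset.singleton_subset_iff.2 ht) hQ hQcard (Finset.singleton_subset_iff.2 htQ)
  exact exists_validPlan_of_reflTransGen hScard hS (hSQ.trans hQT)

/-- Every instance of Connected Unlabeled Multi-Agent Pathfinding on a finite
connected graph is solvable: a valid plan from `S` to `T` always exists. -/
theorem stmt0 [Fintype V] (G : SimpleGraph V) (hG : G.Connected)
    (n : ℕ) (hn : 1 ≤ n) (S T : Finset V)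
    (hS : ConnSet G S) (hT : ConnSet G T)
    (hScard : S.card = n) (hTcard : T.card = n) :
    ∃ (tstar : ℕ) (P : ℕ → Finset V), ValidPlan G n S T tstar P :=
  stmt0_general G hG n S T hS hT hScard hTcard
end

section
/- Let G = (V,E) be a finite, simple, undirected, connected graph, let Q ⊆ V be a nonempty connected vertex set, let t ∈ N(Q), and let V' ⊊ Q be a proper subset such that either V' = ∅, or the induced subgraph G[V'] is connected and t is adjacent to some vertex of V'. Then there exists a vertex v ∈ Q \ V' that is not a cut vertex of the induced subgraph G[Q ∪ {t}]. -/
open SimpleGraph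

variable {V : Type*}

/-- `w` is a cut vertex of the (connected) induced subgraph `G[W]`:
deleting `w` from `G[W]` leaves a disconnected graph. -/
def IsCutVertex (G : SimpleGraph V) (W : Set V) (w : V) : Prop :=
  w ∈ W ∧ (G.induce W).Connected ∧ ¬ (G.induce (W \ {w})).Connected

/-!
With `S := V' ∪ {t}` connected inside the connected set `W := Q ∪ {t}`, pick a vertex
`v ∈ W \ S` at maximal distance in `G[W]` from a fixed vertex of `S`. Every other vertex
of `W \ S` has a shortest walk to that vertex avoiding `v`, and `S` is connected without
`v`, so `G[W \ {v}]` is connected; `v ≠ t` since `t ∈ S`.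
-/

namespace SimpleGraph

variable {G : SimpleGraph V}

lemma Walk.dist_lt_of_length_eq_dist {u v w : V} (p : G.Walk u w) (hp : p.length = G.dist u w)
    (hv : v ∈ p.support) (hvu : v ≠ u) : G.dist v w < G.dist u w := by
  classical
  have hsplit := congrArg Walk.length (p.take_spec hv)
  rw [Walk.length_append] at hsplit
  have htake : (p.takeUntil v hv).length ≠ 0 := fun h ↦
    hvu (Walk.eq_of_length_eq_zero h).symm
  have := dist_le (p.dropUntil v hv)
  omega

def induceInduceIso (W : Set V) (s : Set W) :
    (G.induce W).induce s ≃g G.induce (Subtype.val '' s) where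
  toFun x := ⟨x.1.1, x.1, x.2, rfl⟩
  invFun y := ⟨⟨y.1, by obtain ⟨x, -, hx⟩ := y.2; exact hx ▸ x.2⟩,
    by obtain ⟨x, hx, hxy⟩ := y.2; convert hx using 1; exact Subtype.ext hxy.symm⟩
  left_inv _ := rfl
  right_inv _ := rfl
  map_rel_iff' := Iff.rfl

theorem Connected.exists_connected_induce_compl_singleton_of_connected_induce [Finite V]
    (hG : G.Connected) {S : Set V} (hS : (G.induce S).Connected) (hSc : Sᶜ.Nonempty) :
    ∃ v ∉ S, (G.induce {v}ᶜ).Connected := by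
  obtain ⟨⟨s, hs⟩⟩ := hS.nonempty
  obtain ⟨v, hvS, hmax⟩ := Set.exists_max_image Sᶜ (G.dist · s) Sᶜ.toFinite hSc
  have hSv : S ⊆ {v}ᶜ := fun x hx hxv ↦ hvS (hxv ▸ hx)
  refine ⟨v, hvS, (connected_iff_exists_forall_reachable _).2 ⟨⟨s, hSv hs⟩, ?_⟩⟩
  rintro ⟨u, huv⟩
  by_cases huS : u ∈ S
  · exact (hS.preconnected ⟨s, hs⟩ ⟨u, huS⟩).map (G.induceHomOfLE hSv).toHom
  · obtain ⟨p, hp⟩ := hG.exists_walk_length_eq_dist u s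
    have hvp : v ∉ p.support := fun hv ↦
      (p.dist_lt_of_length_eq_dist hp hv (Ne.symm huv)).not_ge (hmax u huS)
    exact (p.induce {v}ᶜ fun x hx hxv ↦ hvp (hxv ▸ hx)).reachable.symm

theorem exists_connected_induce_diff_singleton {W S : Set V} [Finite W]
    (hW : (G.induce W).Connected) (hS : (G.induce S).Connected) (hSW : S ⊆ W)
    (hWS : (W \ S).Nonempty) : ∃ v ∈ W \ S, (G.induce (W \ {v})).Connected := by
  obtain ⟨w, hwW, hwS⟩ := hWS
  have hS' : ((G.induce W).induce (Subtype.val ⁻¹' S)).Connected := by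
    rwa [(induceInduceIso W _).connected_iff, Subtype.image_preimage_val,
      Set.inter_eq_right.2 hSW]
  obtain ⟨v, hvS, hv⟩ :=
    hW.exists_connected_induce_compl_singleton_of_connected_induce hS' ⟨⟨w, hwW⟩, hwS⟩
  refine ⟨v, ⟨v.2, hvS⟩, ?_⟩
  rwa [(induceInduceIso W _).connected_iff, Set.image_val_compl, Set.image_singleton] at hv

lemma connected_induce_insert_of_adj {s : Set V} {x t : V} (hs : (G.induce s).Preconnected)
    (hx : x ∈ s) (hxt : G.Adj x t) : (G.induce (insert t s)).Connected := by
  rw [← Set.union_singleton]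
  exact connected_induce_union hs Preconnected.of_subsingleton hx rfl hxt

end SimpleGraph

theorem stmt2_general (G : SimpleGraph V)
    (Q : Finset V) (hQconn : ConnSet G Q)
    (t : V) (htQ : t ∉ Q) (htadj : ∃ q ∈ Q, G.Adj q t)
    (V' : Finset V) (hV' : V' ⊂ Q)
    (halt : V' = ∅ ∨
      ((G.induce (V' : Set V)).Connected ∧ ∃ x ∈ V', G.Adj t x)) :
    ∃ v ∈ Q, v ∉ V' ∧ ¬ IsCutVertex G (insert t (Q : Set V)) v := by
  obtain ⟨q, hq, hqt⟩ := htadj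
  have hW : (G.induce (insert t (Q : Set V))).Connected :=
    connected_induce_insert_of_adj hQconn.preconnected hq hqt
  have hS : (G.induce (insert t (V' : Set V))).Connected := by
    rcases halt with rfl | ⟨hV'conn, x, hx, htx⟩
    · rw [Finset.coe_empty, insert_empty_eq]
      exact .of_subsingleton
    · exact connected_induce_insert_of_adj hV'conn.preconnected hx htx.symm
  obtain ⟨w, hwQ, hwV'⟩ := Finset.exists_of_ssubset hV'
  obtain ⟨v, ⟨hvW, hvS⟩, hv⟩ := exists_connected_induce_diff_singleton hW hS
    (Set.insert_subset_insert (by exact_mod_cast hV'.subset))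
    ⟨w, Set.mem_insert_of_mem t hwQ, by simp [hwV', ne_of_mem_of_not_mem hwQ htQ]⟩
  simp only [Set.mem_insert_iff, Finset.mem_coe, not_or] at hvW hvS
  exact ⟨v, hvW.resolve_left hvS.1, hvS.2, fun hcut ↦ hcut.2.2 hv⟩

/-- If `Q` is a nonempty connected vertex set, `t ∈ N(Q)`, and `V' ⊊ Q` with either
`V' = ∅` or `G[V']` connected and `t` adjacent to some vertex of `V'`, then some
vertex of `Q \ V'` is not a cut vertex of `G[Q ∪ {t}]`. -/
theorem stmt2 [Fintype V] (G : SimpleGraph V) (hG : G.Connected)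
    (Q : Finset V) (hQne : Q.Nonempty) (hQconn : ConnSet G Q)
    (t : V) (htQ : t ∉ Q) (htadj : ∃ q ∈ Q, G.Adj q t)
    (V' : Finset V) (hV' : V' ⊂ Q)
    (halt : V' = ∅ ∨
      ((G.induce (V' : Set V)).Connected ∧ ∃ x ∈ V', G.Adj t x)) :
    ∃ v ∈ Q, v ∉ V' ∧ ¬ IsCutVertex G (insert t (Q : Set V)) v :=
  stmt2_general G Q hQconn t htQ htadj V' hV' halt
end

section
/- Let G = (V,E) be a finite, simple, undirected, connected graph, let Q ⊆ V be a nonempty connected vertex set, and let t ∈ N(Q). Then there exists a sequence of pairwise distinct vertices v_0, v_1, …, v_m (m ≥ 1) with consecutive vertices adjacent in G, such that v_m = t, v_i ∈ Q for every 0 ≤ i < m, the vertex set Q' = (Q \ {v_0}) ∪ {t} is connected, and Q' is reachable from Q in one step via the bijection φ : Q → Q' that sends v_i to v_{i+1} for 0 ≤ i < m and fixes every other vertex of Q. -/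
open SimpleGraph

variable {V : Type*}

/-!
Let `q ∈ Q` be a neighbour of `t` and pick `u ∈ Q` farthest from `q` in `G[Q]`. A shortest path in
`G[Q]` from any other vertex of `Q` to `q` avoids `u`, so `(Q \ {u}) ∪ {t}` is connected through the
edge `q t`. Along a path `u = v 0, …, v m = t` through `Q`, the cyclic permutation
`v 0 ↦ v 1 ↦ ⋯ ↦ v m ↦ v 0` maps `Q` onto `(Q \ {u}) ∪ {t}` and moves every agent along an edge.
It can only swap two vertices when `m = 1`, and then one of them is `t ∉ Q`.
-/

section ShiftPerm

variable {α : Type*} [DecidableEq α] {m : ℕ} {v : Fin (m + 1) → α}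

def shiftPerm (v : Fin (m + 1) → α) : Equiv.Perm α := (List.ofFn v).formPerm

theorem shiftPerm_apply_getElem (hv : Function.Injective v) (j : Fin (m + 1)) :
    shiftPerm v (v j) = v ⟨(j + 1) % (m + 1), Nat.mod_lt _ m.succ_pos⟩ := by
  have h := List.formPerm_apply_getElem _ (List.nodup_ofFn.2 hv) j
    (by rw [List.length_ofFn]; exact j.isLt)
  simp only [List.getElem_ofFn, List.length_ofFn] at h
  exact h

theorem shiftPerm_castSucc (hv : Function.Injective v) (i : Fin m) :
    shiftPerm v (v i.castSucc) = v i.succ := by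
  rw [shiftPerm_apply_getElem hv]
  congr
  simp [Nat.mod_eq_of_lt (Nat.succ_lt_succ i.isLt)]

theorem shiftPerm_last (hv : Function.Injective v) :
    shiftPerm v (v (Fin.last m)) = v 0 := by
  rw [shiftPerm_apply_getElem hv]
  congr 1
  ext
  simp

theorem shiftPerm_apply_of_notMem {x : α} (hx : x ∉ Set.range v) : shiftPerm v x = x :=
  List.formPerm_apply_of_notMem (by rwa [List.mem_ofFn'])

theorem shiftPerm_apply_of_forall_ne_castSucc {x : α} (hlast : x ≠ v (Fin.last m))
    (hx : ∀ i : Fin m, x ≠ v i.castSucc) : shiftPerm v x = x := by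
  refine shiftPerm_apply_of_notMem ?_
  rintro ⟨j, rfl⟩
  rcases Fin.eq_castSucc_or_eq_last j with ⟨i, rfl⟩ | rfl
  exacts [hx i rfl, hlast rfl]

theorem mem_insert_erase_shiftPerm_iff {Q : Finset α} (hv : Function.Injective v)
    (h0 : v 0 ∈ Q) (hvQ : ∀ i : Fin m, v i.castSucc ∈ Q) (hlast : v (Fin.last m) ∉ Q) (x : α) :
    x ∈ Q ↔ shiftPerm v x ∈ insert (v (Fin.last m)) (Q.erase (v 0)) := by
  by_cases hx : x ∈ Set.range v
  · obtain ⟨j, rfl⟩ := hx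
    rcases Fin.eq_castSucc_or_eq_last j with ⟨i, rfl⟩ | rfl
    · rw [shiftPerm_castSucc hv]
      refine iff_of_true (hvQ i) ?_
      rcases Fin.eq_castSucc_or_eq_last i.succ with ⟨k, hk⟩ | hk
      · have hk0 : v i.succ ≠ v 0 := hv.ne (Fin.succ_ne_zero i)
        rw [hk] at hk0 ⊢
        exact Finset.mem_insert_of_mem (Finset.mem_erase.2 ⟨hk0, hvQ k⟩)
      · rw [hk]
        exact Finset.mem_insert_self _ _
    · rw [shiftPerm_last hv]
      refine iff_of_false hlast ?_
      have h0last : v 0 ≠ v (Fin.last m) := fun h => hlast (h ▸ h0)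
      simp [h0last]
  · rw [shiftPerm_apply_of_notMem hx]
    simp only [Set.mem_range, not_exists] at hx
    simp [Finset.mem_insert, Finset.mem_erase, Ne.symm (hx _)]

theorem eq_of_shiftPerm_apply_eq_of_shiftPerm_apply_eq (hv : Function.Injective v)
    {x y : α} (hx : x ≠ v (Fin.last m)) (hy : y ≠ v (Fin.last m))
    (hxy : shiftPerm v x = y) (hyx : shiftPerm v y = x) : x = y := by
  by_cases hxv : x ∈ Set.range v
  · obtain ⟨j, rfl⟩ := hxv
    obtain ⟨i, rfl⟩ := Fin.exists_castSucc_eq.2 (hv.ne_iff.1 hx)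
    rw [shiftPerm_castSucc hv] at hxy
    subst hxy
    obtain ⟨k, hk⟩ := Fin.exists_castSucc_eq.2 (hv.ne_iff.1 hy)
    rw [← hk, shiftPerm_castSucc hv] at hyx
    have h₁ := congrArg Fin.val hk
    have h₂ := congrArg Fin.val (hv hyx)
    simp only [Fin.val_castSucc, Fin.val_succ] at h₁ h₂
    omega
  · rw [← hxy, shiftPerm_apply_of_notMem hxv]

end ShiftPerm

namespace SimpleGraph

variable {W : Type*} {G : SimpleGraph W}

theorem Connected.exists_walk_notMem_support_of_dist_le (hG : G.Connected) {q u x : W}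
    (hxu : x ≠ u) (hdist : G.dist x q ≤ G.dist u q) : ∃ p : G.Walk x q, u ∉ p.support := by
  classical
  obtain ⟨p, -, hp⟩ := (hG x q).exists_path_of_dist
  refine ⟨p, fun hu => ?_⟩
  have hsplit : (p.takeUntil u hu).length + (p.dropUntil u hu).length = p.length := by
    rw [← Walk.length_append, Walk.take_spec]
  have hxu_pos : 0 < G.dist x u := (hG x u).pos_dist_of_ne hxu
  have hxu_le : G.dist x u ≤ (p.takeUntil u hu).length := dist_le _
  have huq_le : G.dist u q ≤ (p.dropUntil u hu).length := dist_le _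
  omega

theorem induce_connected_of_forall_walk {s : Set W} {r : W} (hr : r ∈ s)
    (hwalk : ∀ x ∈ s, ∃ p : G.Walk r x, ∀ y ∈ p.support, y ∈ s) : (G.induce s).Connected := by
  refine induce_connected_of_patches r hr fun {x} hx => ?_
  obtain ⟨p, hp⟩ := hwalk x hx
  exact ⟨{y | y ∈ p.support}, hp, p.start_mem_support, p.end_mem_support,
    p.connected_induce_support.preconnected _ _⟩

theorem Walk.IsPath.exists_vertex_tuple {u w : W} {p : G.Walk u w} (hp : p.IsPath) :
    ∃ (m : ℕ) (v : Fin (m + 1) → W), Function.Injective v ∧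
      (∀ i : Fin m, G.Adj (v i.castSucc) (v i.succ)) ∧ v 0 = u ∧ v (Fin.last m) = w ∧
      ∀ i, v i ∈ p.support :=
  ⟨p.length, fun i => p.getVert i,
    fun i j h => Fin.ext (hp.getVert_injOn (by simp [Nat.lt_succ_iff.1 i.isLt])
      (by simp [Nat.lt_succ_iff.1 j.isLt]) h),
    fun i => p.adj_getVert_succ i.isLt, p.getVert_zero, p.getVert_length,
    fun _ => p.getVert_mem_support _⟩

theorem exists_walk_of_induce {s : Set W} {a b : s} (p : (G.induce s).Walk a b) :
    ∃ p' : G.Walk a b, p'.support = p.support.map Subtype.val ∧ (p.IsPath → p'.IsPath) :=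
  ⟨p.map (Embedding.induce s).toHom, Walk.support_map _ _, (·.map Subtype.val_injective)⟩

end SimpleGraph

theorem ConnSet.exists_isPath_and_connSet_insert_erase [DecidableEq V] {G : SimpleGraph V}
    {Q : Finset V} (hQ : ConnSet G Q) {q t : V} (hq : q ∈ Q) (htQ : t ∉ Q) (hqt : G.Adj q t) :
    ∃ u ∈ Q, ∃ P : G.Walk u t, P.IsPath ∧ (∀ y ∈ P.support, y ≠ t → y ∈ Q) ∧
      ConnSet G (insert t (Q.erase u)) := by
  set q' : (Q : Set V) := ⟨q, hq⟩
  obtain ⟨u, -, hu⟩ := Finset.exists_max_image Finset.univ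
    (fun x => (G.induce (Q : Set V)).dist x q') ⟨q', Finset.mem_univ _⟩
  obtain ⟨p, hp⟩ := hQ.exists_isPath u q'
  obtain ⟨p', hp'supp, hp'⟩ := exists_walk_of_induce p
  have hp'Q : ∀ y ∈ p'.support, y ∈ Q := by
    simp only [hp'supp, List.mem_map]
    rintro y ⟨z, -, rfl⟩
    exact z.2
  have htp : t ∉ p'.support := fun h => htQ (hp'Q t h)
  refine ⟨u, u.2, p'.concat hqt, (hp' hp).concat htp hqt, ?_, ?_⟩
  · intro y hy hyt
    rw [Walk.support_concat, List.mem_append, List.mem_singleton] at hy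
    exact hy.elim (hp'Q y) (absurd · hyt)
  · refine induce_connected_of_forall_walk (Finset.mem_insert_self t _) fun x hx => ?_
    rcases Finset.mem_insert.1 hx with rfl | hx
    · exact ⟨Walk.nil, by simp⟩
    obtain ⟨hxu, hxQ⟩ := Finset.mem_erase.1 hx
    obtain ⟨w, hw⟩ := hQ.exists_walk_notMem_support_of_dist_le (x := ⟨x, hxQ⟩)
      (fun h => hxu (congrArg Subtype.val h)) (hu _ (Finset.mem_univ _))
    obtain ⟨w', hw'supp, -⟩ := exists_walk_of_induce w
    refine ⟨Walk.cons hqt.symm w'.reverse, fun y hy => ?_⟩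
    simp only [Walk.support_cons, Walk.support_reverse, List.mem_cons, List.mem_reverse, hw'supp,
      List.mem_map] at hy
    rcases hy with rfl | ⟨z, hz, rfl⟩
    · simp
    · have hzu : (z : V) ≠ u := fun h => hw (Subtype.ext h ▸ hz)
      simp [hzu, z.2]

theorem stmt7_general [DecidableEq V] (G : SimpleGraph V)
    (Q : Finset V) (hQconn : ConnSet G Q)
    (t : V) (htQ : t ∉ Q) (htadj : ∃ q ∈ Q, G.Adj q t) :
    ∃ (m : ℕ) (v : Fin (m + 1) → V), 1 ≤ m ∧
      Function.Injective v ∧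
      (∀ i : Fin m, G.Adj (v i.castSucc) (v i.succ)) ∧
      v (Fin.last m) = t ∧
      (∀ i : Fin m, v i.castSucc ∈ Q) ∧
      ConnSet G (insert t (Q.erase (v 0))) ∧
      ∃ φ : {x // x ∈ Q} ≃ {x // x ∈ insert t (Q.erase (v 0))},
        (∀ x : {x // x ∈ Q}, ((φ x : V) = (x : V)) ∨ G.Adj (x : V) ((φ x : V))) ∧
        (∀ x y : {x // x ∈ Q}, (x : V) ≠ (y : V) →
          ¬(((φ x : V) = (y : V)) ∧ ((φ y : V) = (x : V)))) ∧
        (∀ (i : Fin m) (x : {x // x ∈ Q}), (x : V) = v i.castSucc →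
          (φ x : V) = v i.succ) ∧
        (∀ x : {x // x ∈ Q}, (∀ i : Fin m, (x : V) ≠ v i.castSucc) →
          (φ x : V) = (x : V)) := by
  obtain ⟨q, hq, hqt⟩ := htadj
  obtain ⟨u, hu, P, hP, hPQ, hconn⟩ := hQconn.exists_isPath_and_connSet_insert_erase hq htQ hqt
  obtain ⟨m, v, hv, hadj, rfl, rfl, hvP⟩ := hP.exists_vertex_tuple
  have hm : 1 ≤ m := Nat.one_le_iff_ne_zero.2 fun h => by
    subst h
    exact htQ hu
  have hvQ (i : Fin m) : v i.castSucc ∈ Q :=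
    hPQ _ (hvP _) (hv.ne (Fin.castSucc_lt_last i).ne)
  have hnotlast (x : {x // x ∈ Q}) : (x : V) ≠ v (Fin.last m) := ne_of_mem_of_not_mem x.2 htQ
  refine ⟨m, v, hm, hv, hadj, rfl, hvQ, hconn,
    (shiftPerm v).subtypeEquiv (mem_insert_erase_shiftPerm_iff hv hu hvQ htQ), fun x => ?_,
    fun x y hxy h => hxy (eq_of_shiftPerm_apply_eq_of_shiftPerm_apply_eq hv (hnotlast x)
      (hnotlast y) h.1 h.2),
    fun i x hx => (congrArg (shiftPerm v) hx).trans (shiftPerm_castSucc hv i),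
    fun x hx => shiftPerm_apply_of_forall_ne_castSucc (hnotlast x) hx⟩
  by_cases hx : ∃ i : Fin m, (x : V) = v i.castSucc
  · obtain ⟨i, hi⟩ := hx
    right
    change G.Adj x (shiftPerm v x)
    rw [hi, shiftPerm_castSucc hv]
    exact hadj i
  · exact .inl (shiftPerm_apply_of_forall_ne_castSucc (hnotlast x) fun i h => hx ⟨i, h⟩)

/-- If `Q` is a nonempty connected vertex set and `t ∈ N(Q)`, then there is a
sequence of pairwise distinct vertices `v 0, …, v m` (`m ≥ 1`), consecutive ones
adjacent, ending at `t`, all but the last lying in `Q`, such that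
`Q' = (Q \ {v 0}) ∪ {t}` is connected and is reachable from `Q` in one step via
the bijection sending `v i ↦ v (i+1)` and fixing all other vertices of `Q`. -/
theorem stmt7 [Fintype V] [DecidableEq V] (G : SimpleGraph V) (hG : G.Connected)
    (Q : Finset V) (hQne : Q.Nonempty) (hQconn : ConnSet G Q)
    (t : V) (htQ : t ∉ Q) (htadj : ∃ q ∈ Q, G.Adj q t) :
    ∃ (m : ℕ) (v : Fin (m + 1) → V), 1 ≤ m ∧
      Function.Injective v ∧
      (∀ i : Fin m, G.Adj (v i.castSucc) (v i.succ)) ∧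
      v (Fin.last m) = t ∧
      (∀ i : Fin m, v i.castSucc ∈ Q) ∧
      ConnSet G (insert t (Q.erase (v 0))) ∧
      ∃ φ : {x // x ∈ Q} ≃ {x // x ∈ insert t (Q.erase (v 0))},
        (∀ x : {x // x ∈ Q}, ((φ x : V) = (x : V)) ∨ G.Adj (x : V) ((φ x : V))) ∧
        (∀ x y : {x // x ∈ Q}, (x : V) ≠ (y : V) →
          ¬(((φ x : V) = (y : V)) ∧ ((φ y : V) = (x : V)))) ∧
        (∀ (i : Fin m) (x : {x // x ∈ Q}), (x : V) = v i.castSucc →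
          (φ x : V) = v i.succ) ∧
        (∀ x : {x // x ∈ Q}, (∀ i : Fin m, (x : V) ≠ v i.castSucc) →
          (φ x : V) = (x : V)) :=
  stmt7_general G Q hQconn t htQ htadj
end
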